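/- arXiv:1909.07934 — 4 statements merged into one kernel-verified Lean document; each statement's English description precedes it below -/
import Mathlib

section
/- Let $y_k : [0,\infty) \to [0,\infty)$, $k = 0,1,2,\dots$, be $C^1$ functions satisfying $y_k'(t) + c_k y_k(t) \le c_k A_k \max\{1, \sup_{t\ge 0} y_{k-1}^2(t)\}$ for all $t > 0$, where $c_k > 0$ and $A_k = \bar a 2^{Dk} \ge 1$ with $\bar a, D > 0$. Suppose there is $K > 0$ with $y_k(0) \le K^{2^k}$ for all $k$. Then for every $m \ge 1$ and all $k \ge m$, $y_k(t) \le (2\bar a)^{2^{k-m+1}-1} \cdot 2^{D(2(2^{k-m}-1) + m 2^{k-m+1} - k)} \cdot \max\{\sup_{t\ge 0} y_{m-1}^{2^{k-m+1}}(t), K^{2^k}, 1\}$. -/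
open Real Set

/-!
Multiplying by the integrating factor `exp (c t)` shows that a function with
`y' + c y ≤ c B` never exceeds `max (y 0) B`. Hence
`y k ≤ 2 A_k max (sup y_{k-1}², K^{2^k}, 1)`. Squaring this bound at level `m + j` and feeding it
into level `m + j + 1`, the constants obey `C_{j+1} = 2 A_{m+j+1} C_j²`, `C_0 = 2 A_m`, and the
stated constant is the solution of this recursion.
-/

theorem le_max_of_deriv_add_mul_le {y : ℝ → ℝ} {c B : ℝ} (hc : 0 ≤ c)
    (hy : Differentiable ℝ y) (h : ∀ t, 0 < t → deriv y t + c * y t ≤ c * B)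
    {t : ℝ} (ht : 0 ≤ t) : y t ≤ max (y 0) B := by
  set g : ℝ → ℝ := fun s => exp (c * s) * (y s - B)
  have hg : ∀ s, HasDerivAt g (exp (c * s) * (deriv y s + c * y s - c * B)) s := by
    intro s
    have hexp : HasDerivAt (fun u => exp (c * u)) (exp (c * s) * c) s := by
      simpa using ((hasDerivAt_id s).const_mul c).exp
    exact (hexp.mul ((hy s).hasDerivAt.sub_const B)).congr_deriv (by ring)
  have hanti : AntitoneOn g (Ici 0) := by
    refine antitoneOn_of_deriv_nonpos (convex_Ici 0)
      (fun s _ => (hg s).continuousAt.continuousWithinAt)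
      (fun s _ => (hg s).differentiableAt.differentiableWithinAt) fun s hs => ?_
    rw [interior_Ici] at hs
    rw [(hg s).deriv]
    exact mul_nonpos_of_nonneg_of_nonpos (exp_pos _).le (by linarith [h s hs])
  rcases le_or_gt (y t) B with hle | hlt
  · exact le_max_of_le_right hle
  · have hgt : y t - B ≤ g t :=
      le_mul_of_one_le_left (by linarith) (one_le_exp (mul_nonneg hc ht))
    have hg0 : g 0 = y 0 - B := by simp [g]
    exact le_max_of_le_left (by linarith [hanti self_mem_Ici ht ht])

theorem le_two_mul_mul_max_of_deriv_add_mul_le {u : ℝ → ℝ} {c A S K : ℝ} (hc : 0 ≤ c)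
    (hA : 1 ≤ A) (hu : Differentiable ℝ u)
    (h : ∀ t, 0 < t → deriv u t + c * u t ≤ c * A * max 1 S) (hu0 : u 0 ≤ K)
    {t : ℝ} (ht : 0 ≤ t) : u t ≤ 2 * A * max S (max K 1) := by
  have hR : 1 ≤ max S (max K 1) := le_max_of_le_right (le_max_right _ _)
  refine (le_max_of_deriv_add_mul_le hc hu (fun s hs => (h s hs).trans_eq (mul_assoc _ _ _))
    ht).trans (max_le ?_ ?_)
  · calc u 0 ≤ max S (max K 1) := hu0.trans (le_max_of_le_right (le_max_left _ _))
      _ ≤ 2 * A * max S (max K 1) := le_mul_of_one_le_left (by linarith) (by linarith)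
  · calc A * max 1 S ≤ A * max S (max K 1) :=
          mul_le_mul_of_nonneg_left (max_le hR (le_max_left _ _)) (by linarith)
      _ ≤ 2 * A * max S (max K 1) := by nlinarith

theorem max_sq_le (a b : ℝ) : max a b ^ 2 ≤ max (a ^ 2) (b ^ 2) := by
  rcases max_choice a b with h | h <;> rw [h]
  exacts [le_max_left _ _, le_max_right _ _]

theorem sq_max_iSup_pow_le {ι : Sort*} {f : ι → ℝ} (hf : ∀ i, 0 ≤ f i) (p : ℕ) (a : ℝ) :
    max (⨆ i, f i ^ p) (max a 1) ^ 2 ≤ max (⨆ i, f i ^ (p * 2)) (max (a ^ 2) 1) :=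
  calc max (⨆ i, f i ^ p) (max a 1) ^ 2 ≤ max ((⨆ i, f i ^ p) ^ 2) (max a 1 ^ 2) :=
        max_sq_le _ _
    _ ≤ max ((⨆ i, f i ^ p) ^ 2) (max (a ^ 2) 1) := by
        gcongr
        simpa using max_sq_le a 1
    _ = max (⨆ i, f i ^ (p * 2)) (max (a ^ 2) 1) := by
        simp only [Real.iSup_pow_of_ne_zero (fun i => pow_nonneg (hf i) p) two_ne_zero, pow_mul]

/-- The constant `C_j` of the bound for `y (m + j)`, i.e. the stated constant at `k = m + j`. -/
noncomputable def moserConst (abar D : ℝ) (m j : ℕ) : ℝ :=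
  (2 * abar) ^ (2 ^ (j + 1) - 1 : ℕ) *
    2 ^ (D * (2 * ((2 : ℝ) ^ (j : ℕ) - 1) + m * 2 ^ (j + 1 : ℕ) - ((m + j : ℕ) : ℝ)))

section moserConst

variable {abar D : ℝ} {m : ℕ}

theorem moserConst_zero : moserConst abar D m 0 = 2 * (abar * 2 ^ (D * m)) := by
  simp only [moserConst]
  norm_num
  rw [show (m : ℝ) * 2 - m = m by ring]
  ring

theorem moserConst_succ (j : ℕ) :
    moserConst abar D m (j + 1) =
      2 * (abar * 2 ^ (D * (m + j + 1 : ℕ))) * moserConst abar D m j ^ 2 := by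
  have hexp : (2 : ℕ) ^ (j + 1 + 1) - 1 = (2 ^ (j + 1) - 1) * 2 + 1 := by
    have := @Nat.one_le_two_pow (j + 1)
    rw [pow_succ 2 (j + 1)]
    omega
  have hlin : D * (2 * ((2 : ℝ) ^ (j + 1 : ℕ) - 1) + m * 2 ^ (j + 1 + 1 : ℕ) - (m + (j + 1) : ℕ))
      = D * (m + j + 1 : ℕ) +
        (D * (2 * ((2 : ℝ) ^ (j : ℕ) - 1) + m * 2 ^ (j + 1 : ℕ) - (m + j : ℕ)) +
          D * (2 * ((2 : ℝ) ^ (j : ℕ) - 1) + m * 2 ^ (j + 1 : ℕ) - (m + j : ℕ))) := by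
    push_cast
    ring
  rw [moserConst, moserConst, hexp, hlin, pow_succ, pow_mul, rpow_add two_pos, rpow_add two_pos]
  ring

theorem one_le_moserConst (hA : ∀ k : ℕ, 1 ≤ abar * 2 ^ (D * k)) (j : ℕ) :
    1 ≤ moserConst abar D m j := by
  induction j with
  | zero => rw [moserConst_zero]; linarith [hA m]
  | succ j ih =>
    rw [moserConst_succ]
    nlinarith [hA (m + j + 1), one_le_pow₀ (n := 2) ih]

end moserConst

theorem le_moserConst_mul_max {y : ℕ → ℝ → ℝ} {abar D K : ℝ} {m : ℕ}
    (hy_nonneg : ∀ k t, 0 ≤ t → 0 ≤ y k t) (hA : ∀ k : ℕ, 1 ≤ abar * 2 ^ (D * k))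
    (hstep : ∀ k : ℕ, 1 ≤ k → ∀ t, 0 ≤ t →
      y k t ≤ 2 * (abar * 2 ^ (D * k)) *
        max (⨆ t' : {t : ℝ // 0 ≤ t}, y (k - 1) t'.1 ^ 2) (max (K ^ 2 ^ k) 1))
    (hm : 1 ≤ m) (j : ℕ) {t : ℝ} (ht : 0 ≤ t) :
    y (m + j) t ≤ moserConst abar D m j *
      max (⨆ t' : {t : ℝ // 0 ≤ t}, y (m - 1) t'.1 ^ 2 ^ (j + 1)) (max (K ^ 2 ^ (m + j)) 1) := by
  induction j generalizing t with
  | zero => simpa [moserConst_zero] using hstep m hm t ht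
  | succ j ih =>
    set N : ℕ → ℝ := fun i =>
      max (⨆ t' : {t : ℝ // 0 ≤ t}, y (m - 1) t'.1 ^ 2 ^ (i + 1)) (max (K ^ 2 ^ (m + i)) 1)
    have hN : ∀ i, 1 ≤ N i := fun _ => le_max_of_le_right (le_max_right _ _)
    have hC := one_le_moserConst (m := m) hA j
    have hsup : ⨆ t' : {t : ℝ // 0 ≤ t}, y (m + j) t'.1 ^ 2 ≤ (moserConst abar D m j * N j) ^ 2 :=
      ciSup_le fun t' => pow_le_pow_left₀ (hy_nonneg _ _ t'.2) (ih t'.2) 2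
    have hNsq : N j ^ 2 ≤ N (j + 1) := by
      have := sq_max_iSup_pow_le (fun t' : {t : ℝ // 0 ≤ t} => hy_nonneg (m - 1) _ t'.2)
        (2 ^ (j + 1)) (K ^ 2 ^ (m + j))
      rwa [← pow_succ, ← pow_mul, ← pow_succ] at this
    have hstep' := hstep (m + j + 1) (by omega) t ht
    rw [Nat.add_sub_cancel] at hstep'
    calc y (m + (j + 1)) t
        ≤ 2 * (abar * 2 ^ (D * (m + j + 1 : ℕ))) *
          max (⨆ t' : {t : ℝ // 0 ≤ t}, y (m + j) t'.1 ^ 2) (max (K ^ 2 ^ (m + j + 1)) 1) :=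
          hstep'
      _ ≤ 2 * (abar * 2 ^ (D * (m + j + 1 : ℕ))) * (moserConst abar D m j ^ 2 * N (j + 1)) := by
          refine mul_le_mul_of_nonneg_left (max_le (hsup.trans ?_) ?_)
            (by linarith [hA (m + j + 1)])
          · rw [mul_pow]
            gcongr
          · exact (le_max_right _ _).trans
              (le_mul_of_one_le_left (zero_le_one.trans (hN _)) (one_le_pow₀ hC))
      _ = moserConst abar D m (j + 1) * N (j + 1) := by
          rw [moserConst_succ]
          ring

theorem stmt_0_general (y : ℕ → ℝ → ℝ) (c : ℕ → ℝ) (abar D K : ℝ)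
    (hy_nonneg : ∀ k t, 0 ≤ t → 0 ≤ y k t)
    (hyC1 : ∀ k, ContDiff ℝ 1 (y k))
    (hc : ∀ k, 0 < c k)
    (hA : ∀ k : ℕ, (1 : ℝ) ≤ abar * 2 ^ (D * k))
    (hineq : ∀ k : ℕ, 1 ≤ k → ∀ t : ℝ, 0 < t →
        deriv (y k) t + c k * y k t ≤
          c k * (abar * 2 ^ (D * k)) *
            max 1 (⨆ t' : {t : ℝ // 0 ≤ t}, (y (k - 1) t'.1) ^ 2))
    (hy0 : ∀ k : ℕ, y k 0 ≤ K ^ (2 ^ k : ℕ)) :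
    ∀ m k : ℕ, 1 ≤ m → m ≤ k → ∀ t : ℝ, 0 ≤ t →
      y k t ≤ (2 * abar) ^ (2 ^ (k - m + 1) - 1 : ℕ) *
          2 ^ (D * (2 * ((2 : ℝ) ^ (k - m : ℕ) - 1) + m * 2 ^ (k - m + 1 : ℕ) - k)) *
          max (⨆ t' : {t : ℝ // 0 ≤ t}, (y (m - 1) t'.1) ^ (2 ^ (k - m + 1) : ℕ))
            (max (K ^ (2 ^ k : ℕ)) 1) := by
  intro m k hm hmk t ht
  obtain ⟨j, rfl⟩ := Nat.exists_eq_add_of_le hmk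
  rw [Nat.add_sub_cancel_left]
  exact le_moserConst_mul_max hy_nonneg hA
    (fun k hk t ht => le_two_mul_mul_max_of_deriv_add_mul_le (hc k).le (hA k)
      ((hyC1 k).differentiable one_ne_zero) (hineq k hk) (hy0 k) ht) hm j ht

/-- Moser-type iteration lemma (Lemma 2.2 of the paper). -/
theorem stmt_0 (y : ℕ → ℝ → ℝ) (c : ℕ → ℝ) (abar D K : ℝ)
    (habar : 0 < abar) (hD : 0 < D) (hK : 0 < K)
    (hy_nonneg : ∀ k t, 0 ≤ t → 0 ≤ y k t)
    (hyC1 : ∀ k, ContDiff ℝ 1 (y k))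
    (hc : ∀ k, 0 < c k)
    (hA : ∀ k : ℕ, (1 : ℝ) ≤ abar * 2 ^ (D * k))
    (hbdd : ∀ k, BddAbove (Set.range fun t : {t : ℝ // 0 ≤ t} => y k t.1))
    (hineq : ∀ k : ℕ, 1 ≤ k → ∀ t : ℝ, 0 < t →
        deriv (y k) t + c k * y k t ≤
          c k * (abar * 2 ^ (D * k)) *
            max 1 (⨆ t' : {t : ℝ // 0 ≤ t}, (y (k - 1) t'.1) ^ 2))
    (hy0 : ∀ k : ℕ, y k 0 ≤ K ^ (2 ^ k : ℕ)) :
    ∀ m k : ℕ, 1 ≤ m → m ≤ k → ∀ t : ℝ, 0 ≤ t →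
      y k t ≤ (2 * abar) ^ (2 ^ (k - m + 1) - 1 : ℕ) *
          2 ^ (D * (2 * ((2 : ℝ) ^ (k - m : ℕ) - 1) + m * 2 ^ (k - m + 1 : ℕ) - k)) *
          max (⨆ t' : {t : ℝ // 0 ≤ t}, (y (m - 1) t'.1) ^ (2 ^ (k - m + 1) : ℕ))
            (max (K ^ (2 ^ k : ℕ)) 1) :=
  stmt_0_general y c abar D K hy_nonneg hyC1 hc hA hineq hy0
end

section
/- Let $N > 2$, $s = \frac{2N}{N-2}$, $\beta > 0$, and $1 \le \alpha < 1 + \frac{2\beta}{N}$. Then for every $p \ge \max\{\beta+1-\alpha, 1\}$, $\frac{sp - 2(p+\alpha-1)}{s(p-\alpha+1+\beta) - 2(p+\alpha-1+\beta)} < 1$, and moreover $s(\beta+1-\alpha) - 2\beta > 0$. -/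
/-!
The denominator exceeds the numerator by the gap `s (β + 1 - α) - 2β`, and the numerator exceeds
the gap by `(s - 2)(p - (β + 1 - α)) ≥ 0`. So everything reduces to the positivity of the gap,
which is `2 (2β - N (α - 1)) / (N - 2)`, i.e. exactly the subcritical condition `α < 1 + 2β/N`.
-/

lemma two_lt_two_mul_div_sub_two {n : ℝ} (hn : 2 < n) : 2 < 2 * n / (n - 2) := by
  rw [lt_div_iff₀ (by linarith)]
  linarith

lemma gap_pos_of_lt_critical {n s α β : ℝ} (hn : 2 < n) (hs : s = 2 * n / (n - 2))
    (hα : α < 1 + 2 * β / n) : 0 < s * (β + 1 - α) - 2 * β := by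
  have hsub : 0 < n - 2 := by linarith
  have hcrit : n * (α - 1) < 2 * β := by
    have := (lt_div_iff₀ (by linarith : (0 : ℝ) < n)).mp (by linarith : α - 1 < 2 * β / n)
    linarith
  have hgap : s * (β + 1 - α) - 2 * β = 2 * (2 * β - n * (α - 1)) / (n - 2) := by
    rw [hs]
    field_simp
    ring
  rw [hgap]
  exact div_pos (by linarith) hsub

lemma div_lt_one_of_gap_pos {s p α β : ℝ} (hs : 2 ≤ s) (hp : β + 1 - α ≤ p)
    (hgap : 0 < s * (β + 1 - α) - 2 * β) :
    (s * p - 2 * (p + α - 1)) / (s * (p - α + 1 + β) - 2 * (p + α - 1 + β)) < 1 := by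
  have hnum : s * (β + 1 - α) - 2 * β ≤ s * p - 2 * (p + α - 1) := by
    nlinarith [mul_nonneg (sub_nonneg.mpr hs) (sub_nonneg.mpr hp)]
  have hden : s * (p - α + 1 + β) - 2 * (p + α - 1 + β)
      = (s * p - 2 * (p + α - 1)) + (s * (β + 1 - α) - 2 * β) := by ring
  rw [div_lt_one (by linarith), hden]
  linarith

theorem stmt_5_general (N : ℕ) (hN : 2 < N) (s β α : ℝ)
    (hs : s = 2 * N / (N - 2))
    (hα' : α < 1 + 2 * β / N) :
    (∀ p : ℝ, max (β + 1 - α) 1 ≤ p →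
        (s * p - 2 * (p + α - 1)) /
            (s * (p - α + 1 + β) - 2 * (p + α - 1 + β)) < 1) ∧
      0 < s * (β + 1 - α) - 2 * β := by
  have hn : (2 : ℝ) < N := by exact_mod_cast hN
  have hgap := gap_pos_of_lt_critical hn hs hα'
  have hs2 : 2 ≤ s := hs ▸ (two_lt_two_mul_div_sub_two hn).le
  exact ⟨fun p hp => div_lt_one_of_gap_pos hs2 (le_of_max_le_left hp) hgap, hgap⟩

theorem stmt_5 (N : ℕ) (hN : 2 < N) (s β α : ℝ)
    (hs : s = 2 * N / (N - 2)) (hβ : 0 < β)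
    (hα : 1 ≤ α) (hα' : α < 1 + 2 * β / N) :
    (∀ p : ℝ, max (β + 1 - α) 1 ≤ p →
        (s * p - 2 * (p + α - 1)) /
            (s * (p - α + 1 + β) - 2 * (p + α - 1 + β)) < 1) ∧
      0 < s * (β + 1 - α) - 2 * β :=
  stmt_5_general N hN s β α hs hα'
end

section
/- Let $\alpha \ge 1$, $\beta > 0$, $s > 2$, and define $p_k = 2^k + h$ with $h = \frac{2(s-1)(\alpha-1)}{s-2}$. For $k \ge 1$ set $r_k = \frac{2 p_{k-1}}{p_k}$, $\lambda_k = \frac{\frac{p_k}{2(p_k+\alpha-1)} - \frac{p_k}{2 p_{k-1}}}{\frac{1}{s} - \frac{p_k}{2 p_{k-1}}}$, and $Q_k = \frac{2(1-\lambda_k)(p_k+\alpha-1)}{p_k - \lambda_k(p_k+\alpha-1)}$. Then $\frac{Q_k}{r_k} = 2$ for every $k \ge 1$. -/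
/-!
Write `a = p (k-1)`, `b = p k`. Clearing denominators in `λ` gives
`Q / r = ((s - 2) b - 2 (α - 1)) / ((s - 2) a - s (α - 1))` for arbitrary `a, b`,
and this equals `2` exactly when `(s - 2) (2a - b) = 2 (s - 1) (α - 1)`.
Since `2 p (k-1) - p k = h`, that is the defining equation of `h`.
-/

namespace MoserIteration

lemma exponent_ratio_eq {s a b α lam : ℝ} (hs : s ≠ 0) (ha : a ≠ 0) (hb : b ≠ 0)
    (hA : b + α - 1 ≠ 0) (hsab : s * b - 2 * a ≠ 0)
    (hlam : lam = (b / (2 * (b + α - 1)) - b / (2 * a)) / (1 / s - b / (2 * a))) :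
    2 * (1 - lam) * (b + α - 1) / (b - lam * (b + α - 1)) / (2 * a / b) =
      ((s - 2) * b - 2 * (α - 1)) / ((s - 2) * a - s * (α - 1)) := by
  have hlam_closed : lam = s * b * (b + α - 1 - a) / ((b + α - 1) * (s * b - 2 * a)) := by
    have hquot : 1 / s - b / (2 * a) ≠ 0 := by
      rw [div_sub_div _ _ hs (by simpa using ha)]
      exact div_ne_zero (by contrapose! hsab; linear_combination -hsab) (by simp [hs, ha])
    rw [hlam, div_eq_div_iff hquot (mul_ne_zero hA hsab)]
    field_simp
    ring
  have hone_sub : 1 - lam = a * (s * b - 2 * (b + α - 1)) / ((b + α - 1) * (s * b - 2 * a)) := by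
    rw [hlam_closed, eq_div_iff (mul_ne_zero hA hsab), sub_mul,
      div_mul_cancel₀ _ (mul_ne_zero hA hsab)]
    ring
  have hsub_mul : b - lam * (b + α - 1) = b * ((s - 2) * a - s * (α - 1)) / (s * b - 2 * a) := by
    have hlamA : lam * (b + α - 1) = s * b * (b + α - 1 - a) / (s * b - 2 * a) := by
      rw [hlam_closed, mul_comm (b + α - 1), ← div_div, div_mul_cancel₀ _ hA]
    rw [hlamA, eq_div_iff hsab, sub_mul, div_mul_cancel₀ _ hsab]
    ring
  rw [hone_sub, hsub_mul]
  field_simp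
  ring

lemma shifted_ratio_eq_two {s a b α : ℝ} (hden : (s - 2) * a - s * (α - 1) ≠ 0)
    (hshift : (s - 2) * (2 * a - b) = 2 * (s - 1) * (α - 1)) :
    ((s - 2) * b - 2 * (α - 1)) / ((s - 2) * a - s * (α - 1)) = 2 := by
  rw [div_eq_iff hden]
  linear_combination -hshift

end MoserIteration

open MoserIteration in
theorem stmt_6_general (α s h : ℝ) (hα : 1 ≤ α) (hs : 2 < s)
    (hh : h = 2 * (s - 1) * (α - 1) / (s - 2))
    (p : ℕ → ℝ) (hp : ∀ k : ℕ, p k = 2 ^ k + h)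
    (r lam Q : ℕ → ℝ)
    (hr : ∀ k : ℕ, 1 ≤ k → r k = 2 * p (k - 1) / p k)
    (hlam : ∀ k : ℕ, 1 ≤ k →
      lam k = (p k / (2 * (p k + α - 1)) - p k / (2 * p (k - 1))) /
        (1 / s - p k / (2 * p (k - 1))))
    (hQ : ∀ k : ℕ, 1 ≤ k →
      Q k = 2 * (1 - lam k) * (p k + α - 1) / (p k - lam k * (p k + α - 1))) :
    ∀ k : ℕ, 1 ≤ k → Q k / r k = 2 := by
  intro k hk
  obtain ⟨m, rfl⟩ : ∃ m, k = m + 1 := ⟨k - 1, by omega⟩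
  have hpow : (0 : ℝ) < 2 ^ m := by positivity
  have hsh : (s - 2) * h = 2 * (s - 1) * (α - 1) := by
    rw [hh]; field_simp [show s - 2 ≠ 0 by linarith]
  have hh0 : 0 ≤ h := by nlinarith
  have ha : p m = 2 ^ m + h := hp m
  have hb : p (m + 1) = 2 * 2 ^ m + h := by rw [hp, pow_succ]; ring
  have hden : (s - 2) * p m - s * (α - 1) = (s - 2) * (2 ^ m + α - 1) := by
    rw [ha]; linear_combination hsh
  have hlamk := hlam _ hk
  rw [Nat.add_sub_cancel] at hlamk
  rw [hQ _ hk, hr _ hk, Nat.add_sub_cancel]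
  rw [exponent_ratio_eq (by linarith) (by linarith) (by linarith) (by linarith)
      (by rw [ha, hb]; nlinarith) hlamk]
  exact shifted_ratio_eq_two (by rw [hden]; exact (mul_pos (by linarith) (by linarith)).ne')
    (by rw [ha, hb]; linear_combination hsh)

theorem stmt_6 (α β s h : ℝ) (hα : 1 ≤ α) (hβ : 0 < β) (hs : 2 < s)
    (hh : h = 2 * (s - 1) * (α - 1) / (s - 2))
    (p : ℕ → ℝ) (hp : ∀ k : ℕ, p k = 2 ^ k + h)
    (r lam Q : ℕ → ℝ)
    (hr : ∀ k : ℕ, 1 ≤ k → r k = 2 * p (k - 1) / p k)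
    (hlam : ∀ k : ℕ, 1 ≤ k →
      lam k = (p k / (2 * (p k + α - 1)) - p k / (2 * p (k - 1))) /
        (1 / s - p k / (2 * p (k - 1))))
    (hQ : ∀ k : ℕ, 1 ≤ k →
      Q k = 2 * (1 - lam k) * (p k + α - 1) / (p k - lam k * (p k + α - 1))) :
    ∀ k : ℕ, 1 ≤ k → Q k / r k = 2 :=
  stmt_6_general α s h hα hs hh p hp r lam Q hr hlam hQ
end

section
/- Let $\delta > 0$, $x \in \mathbb{R}^N$, let $B(x,\delta)$ be the cube $\{y : |y_i - x_i| \le \delta\}$, let $J : \mathbb{R}^N \to [0,\infty)$ be measurable with $\int_{B(0,2\delta)} |z|^2 J(z)\, dz \le (2\delta)^2 \int_{\mathbb{R}^N} J$, with $\int_{\mathbb{R}^N} J = 1$, and let $v \in C^1(\mathbb{R}^N)$. Then $\int_{B(x,\delta)} \int_{B(x,\delta)} (v(y) - v(z))^2 J(z-y)\, dz\, dy \le (2\delta)^2 \int_{B(x,\delta)} |\nabla v(y)|^2 dy$. -/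
open MeasureTheory Set
open scoped ENNReal

/-!
Writing `v z - v y` as the integral of `Dv` along the segment from `y` to `z` and applying
Cauchy–Schwarz in the segment parameter `θ` gives
`(v y - v z)² ≤ ‖z - y‖² ∫₀¹ ‖Dv (y + θ (z - y))‖² dθ`.
For fixed `θ`, the shear `(y, z) ↦ (z - y, y + θ (z - y))` preserves Lebesgue measure, and by
convexity it maps the square of the cube `B(x, δ)` into `B(0, 2δ) × B(x, δ)`; so the double
integral splits into the second moment of `J` on `B(0, 2δ)` times `∫_{B(x, δ)} ‖Dv‖²`.
Everything is done with lower Lebesgue integrals, where Tonelli needs no integrability, and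
transferred to Bochner integrals at the end.
-/

theorem sq_lintegral_le_lintegral_sq {α : Type*} [MeasurableSpace α] {μ : Measure α}
    [IsProbabilityMeasure μ] {f : α → ℝ≥0∞} (hf : AEMeasurable f μ) :
    (∫⁻ a, f a ∂μ) ^ 2 ≤ ∫⁻ a, f a ^ 2 ∂μ := by
  have h := ENNReal.lintegral_mul_le_Lp_mul_Lq μ .two_two hf aemeasurable_const (g := 1)
  simp only [Pi.one_apply, mul_one, ENNReal.one_rpow, lintegral_const, measure_univ] at h
  calc (∫⁻ a, f a ∂μ) ^ 2 ≤ ((∫⁻ a, f a ^ (2:ℝ) ∂μ) ^ (1 / 2 : ℝ)) ^ (2:ℝ) := by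
        rw [ENNReal.rpow_two]; gcongr
    _ = ∫⁻ a, f a ^ 2 ∂μ := by
        rw [← ENNReal.rpow_mul]; norm_num

section Segment
variable {E F : Type*} [NormedAddCommGroup E] [NormedSpace ℝ E]
  [NormedAddCommGroup F] [NormedSpace ℝ F] [CompleteSpace F]

theorem sub_eq_integral_fderiv_segment {v : E → F} (hv : ContDiff ℝ 1 v) (y z : E) :
    v z - v y = ∫ θ in (0:ℝ)..1, fderiv ℝ v (y + θ • (z - y)) (z - y) := by
  have hderiv : ∀ θ ∈ uIcc (0:ℝ) 1, HasDerivAt (fun t : ℝ => v (y + t • (z - y)))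
      (fderiv ℝ v (y + θ • (z - y)) (z - y)) θ := fun θ _ => by
    have := ((hasDerivAt_id θ).smul_const (z - y)).const_add y
    simp only [id, one_smul] at this
    exact (hv.differentiable one_ne_zero _).hasFDerivAt.comp_hasDerivAt θ this
  rw [intervalIntegral.integral_eq_sub_of_hasDerivAt hderiv]
  · simp
  · exact ((hv.continuous_fderiv one_ne_zero).comp (by fun_prop)).clm_apply continuous_const
      |>.intervalIntegrable 0 1

theorem enorm_sub_sq_le_lintegral_fderiv_segment {v : E → F} (hv : ContDiff ℝ 1 v) (y z : E) :
    ‖v z - v y‖ₑ ^ 2 ≤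
      ‖z - y‖ₑ ^ 2 * ∫⁻ θ in Ioc (0:ℝ) 1, ‖fderiv ℝ v (y + θ • (z - y))‖ₑ ^ 2 := by
  have : IsProbabilityMeasure (volume.restrict (Ioc (0:ℝ) 1)) := ⟨by simp⟩
  have hlin : ‖v z - v y‖ₑ ≤ ∫⁻ θ in Ioc (0:ℝ) 1, ‖fderiv ℝ v (y + θ • (z - y))‖ₑ * ‖z - y‖ₑ := by
    rw [sub_eq_integral_fderiv_segment hv, intervalIntegral.integral_of_le zero_le_one]
    exact (enorm_integral_le_lintegral_enorm _).trans
      (lintegral_mono fun θ => ContinuousLinearMap.le_opENorm _ _)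
  calc ‖v z - v y‖ₑ ^ 2
      ≤ (∫⁻ θ in Ioc (0:ℝ) 1, ‖fderiv ℝ v (y + θ • (z - y))‖ₑ * ‖z - y‖ₑ) ^ 2 := by gcongr
    _ ≤ ∫⁻ θ in Ioc (0:ℝ) 1, (‖fderiv ℝ v (y + θ • (z - y))‖ₑ * ‖z - y‖ₑ) ^ 2 :=
        sq_lintegral_le_lintegral_sq (by fun_prop)
    _ = ‖z - y‖ₑ ^ 2 * ∫⁻ θ in Ioc (0:ℝ) 1, ‖fderiv ℝ v (y + θ • (z - y))‖ₑ ^ 2 := by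
        simp_rw [mul_pow, mul_comm _ (‖z - y‖ₑ ^ 2)]
        exact lintegral_const_mul' _ _ (by simp)
end Segment

section Shear
variable {E : Type*} [NormedAddCommGroup E] [NormedSpace ℝ E] [MeasurableSpace E] [BorelSpace E]
  [SecondCountableTopology E] {μ : Measure E} [μ.IsAddRightInvariant] [SFinite μ]

theorem lintegral_lintegral_mul_shear {f h : E → ℝ≥0∞} (hf : Measurable f) (hh : Measurable h)
    (θ : ℝ) :
    ∫⁻ y, ∫⁻ z, f (z - y) * h (y + θ • (z - y)) ∂μ ∂μ = (∫⁻ w, f w ∂μ) * ∫⁻ u, h u ∂μ := by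
  calc ∫⁻ y, ∫⁻ z, f (z - y) * h (y + θ • (z - y)) ∂μ ∂μ
      = ∫⁻ y, ∫⁻ w, f w * h (y + θ • w) ∂μ ∂μ := by
        refine lintegral_congr fun y => ?_
        rw [← lintegral_add_right_eq_self _ y]
        simp only [add_sub_cancel_right]
    _ = ∫⁻ w, ∫⁻ y, f w * h (y + θ • w) ∂μ ∂μ :=
        lintegral_lintegral_swap (by fun_prop)
    _ = ∫⁻ w, f w * ∫⁻ u, h u ∂μ ∂μ := by
        refine lintegral_congr fun w => ?_
        rw [lintegral_const_mul _ (by fun_prop), lintegral_add_right_eq_self]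
    _ = (∫⁻ w, f w ∂μ) * ∫⁻ u, h u ∂μ := lintegral_mul_const _ hf

theorem setLIntegral_setLIntegral_mul_shear_le {Q S : Set E} (hQ : MeasurableSet Q)
    (hQc : Convex ℝ Q) (hS : MeasurableSet S) (hQS : ∀ y ∈ Q, ∀ z ∈ Q, z - y ∈ S)
    {f h : E → ℝ≥0∞} (hf : Measurable f) (hh : Measurable h) {θ : ℝ} (hθ : θ ∈ Icc (0:ℝ) 1) :
    ∫⁻ y in Q, ∫⁻ z in Q, f (z - y) * h (y + θ • (z - y)) ∂μ ∂μ ≤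
      (∫⁻ w in S, f w ∂μ) * ∫⁻ u in Q, h u ∂μ := by
  have hmem : ∀ y ∈ Q, ∀ z ∈ Q, y + θ • (z - y) ∈ Q := fun y hy z hz => by
    simpa [add_comm] using hQc.add_smul_sub_mem hy hz hθ
  calc ∫⁻ y in Q, ∫⁻ z in Q, f (z - y) * h (y + θ • (z - y)) ∂μ ∂μ
      ≤ ∫⁻ y in Q, ∫⁻ z in Q, S.indicator f (z - y) * Q.indicator h (y + θ • (z - y)) ∂μ ∂μ := by
        refine setLIntegral_mono' hQ fun y hy => setLIntegral_mono' hQ fun z hz => ?_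
        rw [indicator_of_mem (hQS y hy z hz), indicator_of_mem (hmem y hy z hz)]
    _ ≤ ∫⁻ y, ∫⁻ z, S.indicator f (z - y) * Q.indicator h (y + θ • (z - y)) ∂μ ∂μ :=
        (setLIntegral_le_lintegral _ _).trans
          (lintegral_mono fun y => setLIntegral_le_lintegral _ _)
    _ = (∫⁻ w in S, f w ∂μ) * ∫⁻ u in Q, h u ∂μ := by
        rw [lintegral_lintegral_mul_shear (hf.indicator hS) (hh.indicator hQ),
          lintegral_indicator hS, lintegral_indicator hQ]

theorem setLIntegral_setLIntegral_mul_lintegral_segment_le {Q S : Set E} (hQ : MeasurableSet Q)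
    (hQc : Convex ℝ Q) (hS : MeasurableSet S) (hQS : ∀ y ∈ Q, ∀ z ∈ Q, z - y ∈ S)
    {f h : E → ℝ≥0∞} (hf : Measurable f) (hh : Measurable h) :
    ∫⁻ y in Q, ∫⁻ z in Q, f (z - y) * (∫⁻ θ in Ioc (0:ℝ) 1, h (y + θ • (z - y))) ∂μ ∂μ ≤
      (∫⁻ w in S, f w ∂μ) * ∫⁻ u in Q, h u ∂μ := by
  have hF : Measurable fun p : (E × ℝ) × E =>
      f (p.2 - p.1.1) * h (p.1.1 + p.1.2 • (p.2 - p.1.1)) := by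
    fun_prop
  calc ∫⁻ y in Q, ∫⁻ z in Q, f (z - y) * (∫⁻ θ in Ioc (0:ℝ) 1, h (y + θ • (z - y))) ∂μ ∂μ
      = ∫⁻ y in Q, (∫⁻ θ in Ioc (0:ℝ) 1, ∫⁻ z in Q, f (z - y) * h (y + θ • (z - y)) ∂μ) ∂μ := by
        refine lintegral_congr fun y => ?_
        rw [← lintegral_lintegral_swap (by fun_prop)]
        exact lintegral_congr fun z => (lintegral_const_mul _ (hh.comp (by fun_prop))).symm
    _ = ∫⁻ θ in Ioc (0:ℝ) 1, ∫⁻ y in Q, ∫⁻ z in Q, f (z - y) * h (y + θ • (z - y)) ∂μ ∂μ :=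
        lintegral_lintegral_swap (hF.lintegral_prod_right').aemeasurable
    _ ≤ ∫⁻ θ in Ioc (0:ℝ) 1, (∫⁻ w in S, f w ∂μ) * ∫⁻ u in Q, h u ∂μ :=
        setLIntegral_mono' measurableSet_Ioc fun θ hθ =>
          setLIntegral_setLIntegral_mul_shear_le hQ hQc hS hQS hf hh (Ioc_subset_Icc_self hθ)
    _ = (∫⁻ w in S, f w ∂μ) * ∫⁻ u in Q, h u ∂μ := by simp

theorem setLIntegral_setLIntegral_enorm_sub_sq_mul_le {F : Type*} [NormedAddCommGroup F]
    [NormedSpace ℝ F] [CompleteSpace F] {Q S : Set E} (hQ : MeasurableSet Q) (hQc : Convex ℝ Q)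
    (hS : MeasurableSet S) (hQS : ∀ y ∈ Q, ∀ z ∈ Q, z - y ∈ S) {v : E → F} (hv : ContDiff ℝ 1 v)
    {j : E → ℝ≥0∞} (hj : Measurable j) :
    ∫⁻ y in Q, ∫⁻ z in Q, ‖v y - v z‖ₑ ^ 2 * j (z - y) ∂μ ∂μ ≤
      (∫⁻ w in S, ‖w‖ₑ ^ 2 * j w ∂μ) * ∫⁻ u in Q, ‖fderiv ℝ v u‖ₑ ^ 2 ∂μ := by
  calc ∫⁻ y in Q, ∫⁻ z in Q, ‖v y - v z‖ₑ ^ 2 * j (z - y) ∂μ ∂μ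
      ≤ ∫⁻ y in Q, ∫⁻ z in Q, ‖z - y‖ₑ ^ 2 * j (z - y) *
          (∫⁻ θ in Ioc (0:ℝ) 1, ‖fderiv ℝ v (y + θ • (z - y))‖ₑ ^ 2) ∂μ ∂μ := by
        refine lintegral_mono fun y => lintegral_mono fun z => ?_
        rw [enorm_sub_rev, mul_right_comm]
        gcongr
        exact enorm_sub_sq_le_lintegral_fderiv_segment hv y z
    _ ≤ _ := setLIntegral_setLIntegral_mul_lintegral_segment_le hQ hQc hS hQS
        ((measurable_enorm.pow_const 2).mul hj)
        ((hv.continuous_fderiv one_ne_zero).measurable.enorm.pow_const 2)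
end Shear

section Cube
variable {ι : Type*}

theorem sub_mem_cube_of_mem_cube {x y z : EuclideanSpace ℝ ι} {δ : ℝ}
    (hy : ∀ i, |y i - x i| ≤ δ) (hz : ∀ i, |z i - x i| ≤ δ) (i : ι) : |(z - y) i| ≤ 2 * δ := by
  have := abs_sub_le (z i) (x i) (y i)
  rw [abs_sub_comm (x i)] at this
  simp only [PiLp.sub_apply]
  linarith [hy i, hz i]

theorem cube_eq_preimage_pi (x : EuclideanSpace ℝ ι) (δ : ℝ) :
    {y : EuclideanSpace ℝ ι | ∀ i, |y i - x i| ≤ δ} =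
      EuclideanSpace.equiv ι ℝ ⁻¹' univ.pi fun i => Icc (x i - δ) (x i + δ) := by
  ext y
  simp only [mem_ofPred_eq, mem_preimage, mem_univ_pi, mem_Icc, abs_sub_le_iff,
    PiLp.continuousLinearEquiv_apply]
  exact forall_congr' fun i => by constructor <;> intro h <;> constructor <;> linarith [h.1, h.2]

theorem isCompact_cube (x : EuclideanSpace ℝ ι) (δ : ℝ) :
    IsCompact {y : EuclideanSpace ℝ ι | ∀ i, |y i - x i| ≤ δ} := by
  rw [cube_eq_preimage_pi]
  exact (EuclideanSpace.equiv ι ℝ).toHomeomorph.isCompact_preimage.2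
    (isCompact_univ_pi fun _ => isCompact_Icc)

theorem convex_cube (x : EuclideanSpace ℝ ι) (δ : ℝ) :
    Convex ℝ {y : EuclideanSpace ℝ ι | ∀ i, |y i - x i| ≤ δ} := by
  rw [cube_eq_preimage_pi]
  exact (convex_pi fun _ _ => convex_Icc _ _).linear_preimage (EuclideanSpace.equiv ι ℝ).toLinearMap

end Cube

theorem lintegral_enorm_eq_ofReal_integral {α : Type*} [MeasurableSpace α] {μ : Measure α}
    {f : α → ℝ} (hf : Integrable f μ) (hf₀ : ∀ x, 0 ≤ f x) :
    ∫⁻ x, ‖f x‖ₑ ∂μ = ENNReal.ofReal (∫ x, f x ∂μ) := by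
  simp_rw [← ofReal_integral_norm_eq_lintegral_enorm hf, Real.norm_of_nonneg (hf₀ _)]

theorem integral_integral_le_of_lintegral_lintegral_enorm_le {α β : Type*} [MeasurableSpace α]
    [MeasurableSpace β] {μ : Measure α} {ν : Measure β} {F : α → β → ℝ} {b : ℝ} (hb : 0 ≤ b)
    (h : ∫⁻ x, ∫⁻ y, ‖F x y‖ₑ ∂ν ∂μ ≤ ENNReal.ofReal b) :
    ∫ x, ∫ y, F x y ∂ν ∂μ ≤ b := by
  refine (le_abs_self _).trans ?_
  rw [← Real.norm_eq_abs, ← toReal_enorm]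
  refine ENNReal.toReal_le_of_le_ofReal hb ?_
  exact (enorm_integral_le_lintegral_enorm _).trans
    ((lintegral_mono fun x => enorm_integral_le_lintegral_enorm _).trans h)

theorem stmt_12_general (N : ℕ) (δ : ℝ)
    (x : EuclideanSpace ℝ (Fin N))
    (J : EuclideanSpace ℝ (Fin N) → ℝ)
    (hJ_meas : Measurable J) (hJ_nonneg : ∀ z, 0 ≤ J z)
    (hJ_tot : ∫ z, J z = 1) (hJ_int : Integrable J)
    (hJ_mom : ∫ z in {z : EuclideanSpace ℝ (Fin N) | ∀ i, |z i| ≤ 2 * δ},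
        ‖z‖ ^ 2 * J z ≤ (2 * δ) ^ 2 * ∫ z, J z)
    (v : EuclideanSpace ℝ (Fin N) → ℝ) (hv : ContDiff ℝ 1 v) :
    ∫ y in {y : EuclideanSpace ℝ (Fin N) | ∀ i, |y i - x i| ≤ δ},
        ∫ z in {z : EuclideanSpace ℝ (Fin N) | ∀ i, |z i - x i| ≤ δ},
          (v y - v z) ^ 2 * J (z - y) ≤
      (2 * δ) ^ 2 *
        ∫ y in {y : EuclideanSpace ℝ (Fin N) | ∀ i, |y i - x i| ≤ δ},
          ‖fderiv ℝ v y‖ ^ 2 := by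
  set Q := {y : EuclideanSpace ℝ (Fin N) | ∀ i, |y i - x i| ≤ δ}
  set S := {z : EuclideanSpace ℝ (Fin N) | ∀ i, |z i| ≤ 2 * δ}
  have hQ : IsCompact Q := isCompact_cube x δ
  have hS : IsCompact S := by simpa using isCompact_cube (0 : EuclideanSpace ℝ (Fin N)) (2 * δ)
  have hmom : ∫⁻ w in S, ‖w‖ₑ ^ 2 * ‖J w‖ₑ ≤ ENNReal.ofReal ((2 * δ) ^ 2) := by
    have hint : IntegrableOn (fun w => ‖w‖ ^ 2 * J w) S :=
      hJ_int.integrableOn.continuousOn_mul (by fun_prop) hS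
    calc ∫⁻ w in S, ‖w‖ₑ ^ 2 * ‖J w‖ₑ = ∫⁻ w in S, ‖‖w‖ ^ 2 * J w‖ₑ := by
          simp only [enorm_mul, enorm_pow, enorm_norm]
      _ = ENNReal.ofReal (∫ w in S, ‖w‖ ^ 2 * J w) :=
          lintegral_enorm_eq_ofReal_integral hint fun w => mul_nonneg (by positivity) (hJ_nonneg w)
      _ ≤ ENNReal.ofReal ((2 * δ) ^ 2) := ENNReal.ofReal_le_ofReal (by simpa [hJ_tot] using hJ_mom)
  have hgrad : ∫⁻ u in Q, ‖fderiv ℝ v u‖ₑ ^ 2 = ENNReal.ofReal (∫ u in Q, ‖fderiv ℝ v u‖ ^ 2) := by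
    simp_rw [← enorm_norm (fderiv ℝ v _), ← enorm_pow]
    exact lintegral_enorm_eq_ofReal_integral
      (((hv.continuous_fderiv one_ne_zero).norm.pow 2).continuousOn.integrableOn_compact hQ)
      fun u => by positivity
  refine integral_integral_le_of_lintegral_lintegral_enorm_le (by positivity) ?_
  calc ∫⁻ y in Q, ∫⁻ z in Q, ‖(v y - v z) ^ 2 * J (z - y)‖ₑ
      = ∫⁻ y in Q, ∫⁻ z in Q, ‖v y - v z‖ₑ ^ 2 * ‖J (z - y)‖ₑ := by simp only [enorm_mul, enorm_pow]
    _ ≤ (∫⁻ w in S, ‖w‖ₑ ^ 2 * ‖J w‖ₑ) * ∫⁻ u in Q, ‖fderiv ℝ v u‖ₑ ^ 2 :=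
        setLIntegral_setLIntegral_enorm_sub_sq_mul_le hQ.measurableSet (convex_cube x δ)
          hS.measurableSet (fun y hy z hz => sub_mem_cube_of_mem_cube hy hz) hv hJ_meas.enorm
    _ ≤ ENNReal.ofReal ((2 * δ) ^ 2) * ENNReal.ofReal (∫ u in Q, ‖fderiv ℝ v u‖ ^ 2) := by
        rw [hgrad]; gcongr
    _ = _ := (ENNReal.ofReal_mul (by positivity)).symm

/-- Nonlocal dissipation gradient estimate (3.4)-(3.6). -/
theorem stmt_12 (N : ℕ) (δ : ℝ) (hδ : 0 < δ)
    (x : EuclideanSpace ℝ (Fin N))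
    (J : EuclideanSpace ℝ (Fin N) → ℝ)
    (hJ_meas : Measurable J) (hJ_nonneg : ∀ z, 0 ≤ J z)
    (hJ_tot : ∫ z, J z = 1) (hJ_int : Integrable J)
    (hJ_mom : ∫ z in {z : EuclideanSpace ℝ (Fin N) | ∀ i, |z i| ≤ 2 * δ},
        ‖z‖ ^ 2 * J z ≤ (2 * δ) ^ 2 * ∫ z, J z)
    (v : EuclideanSpace ℝ (Fin N) → ℝ) (hv : ContDiff ℝ 1 v) :
    ∫ y in {y : EuclideanSpace ℝ (Fin N) | ∀ i, |y i - x i| ≤ δ},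
        ∫ z in {z : EuclideanSpace ℝ (Fin N) | ∀ i, |z i - x i| ≤ δ},
          (v y - v z) ^ 2 * J (z - y) ≤
      (2 * δ) ^ 2 *
        ∫ y in {y : EuclideanSpace ℝ (Fin N) | ∀ i, |y i - x i| ≤ δ},
          ‖fderiv ℝ v y‖ ^ 2 :=
  stmt_12_general N δ x J hJ_meas hJ_nonneg hJ_tot hJ_int hJ_mom v hv
end
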